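/- Let Δx, Δy, Δt be positive reals, q^1,…,q^M real constants, and let c^l, c'^l : ℤ × ℤ → ℝ (l = 1,…,M), ρ^f : ℤ × ℤ → ℝ, and Dx, Dy, D*x, D*y, Jx^l, Jy^l, Θx, Θy : ℤ × ℤ → ℝ be grid functions. Define the discrete divergence of an edge field (Fx, Fy) at cell (i,j) by divF(i,j) := (Fx(i,j) − Fx(i−1,j))/Δx + (Fy(i,j) − Fy(i,j−1))/Δy. Assume: (a) divD(i,j) = Σ_{l=1}^M q^l c^l(i,j) + ρ^f(i,j) for all (i,j); (b) c'^l(i,j) = c^l(i,j) − Δt · divJ^l(i,j) for all l and (i,j); (c) D*x = Dx + Δt(− Σ_{l=1}^M q^l Jx^l + Θx) and D*y = Dy + Δt(− Σ_{l=1}^M q^l Jy^l + Θy) entrywise; (d) divΘ(i,j) = 0 for all (i,j). Then divD*(i,j) = Σ_{l=1}^M q^l c'^l(i,j) + ρ^f(i,j) for all (i,j). -/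
import Mathlib


/-- Discrete divergence of an edge field `(Fx, Fy)` at cell `(i, j)`. -/
noncomputable def discDiv (Δx Δy : ℝ) (Fx Fy : ℤ × ℤ → ℝ) (i j : ℤ) : ℝ :=
  (Fx (i, j) - Fx (i - 1, j)) / Δx + (Fy (i, j) - Fy (i, j - 1)) / Δy

/-- The finite-difference Maxwell–Ampère–Nernst–Planck update preserves the
discrete Gauss law: if `div D = Σ q^l c^l + ρ^f`, the concentrations are updated by
`c'^l = c^l − Δt · div J^l`, the displacement by `D* = D + Δt(−Σ q^l J^l + Θ)` with `Θ`
discretely divergence-free, then `div D* = Σ q^l c'^l + ρ^f`. -/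
theorem discrete_gauss_law_preserved
    (M : ℕ) (Δx Δy Δt : ℝ) (hΔx : 0 < Δx) (hΔy : 0 < Δy) (hΔt : 0 < Δt)
    (q : Fin M → ℝ)
    (c c' : Fin M → ℤ × ℤ → ℝ)
    (ρf : ℤ × ℤ → ℝ)
    (Dx Dy Dsx Dsy Θx Θy : ℤ × ℤ → ℝ)
    (Jx Jy : Fin M → ℤ × ℤ → ℝ)
    (ha : ∀ i j : ℤ,
      discDiv Δx Δy Dx Dy i j = (∑ l, q l * c l (i, j)) + ρf (i, j))
    (hb : ∀ (l : Fin M) (i j : ℤ),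
      c' l (i, j) = c l (i, j) - Δt * discDiv Δx Δy (Jx l) (Jy l) i j)
    (hcx : ∀ i j : ℤ,
      Dsx (i, j) = Dx (i, j) + Δt * ((-∑ l, q l * Jx l (i, j)) + Θx (i, j)))
    (hcy : ∀ i j : ℤ,
      Dsy (i, j) = Dy (i, j) + Δt * ((-∑ l, q l * Jy l (i, j)) + Θy (i, j)))
    (hd : ∀ i j : ℤ, discDiv Δx Δy Θx Θy i j = 0) :
    ∀ i j : ℤ,
      discDiv Δx Δy Dsx Dsy i j = (∑ l, q l * c' l (i, j)) + ρf (i, j) := by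
  intro i j
  have hsum : ∑ l, q l * discDiv Δx Δy (Jx l) (Jy l) i j
      = ((∑ l, q l * Jx l (i, j)) - ∑ l, q l * Jx l (i - 1, j)) / Δx
        + ((∑ l, q l * Jy l (i, j)) - ∑ l, q l * Jy l (i, j - 1)) / Δy := by
    have : ∀ l : Fin M, q l * discDiv Δx Δy (Jx l) (Jy l) i j
        = (q l * Jx l (i, j) - q l * Jx l (i - 1, j)) / Δx
          + (q l * Jy l (i, j) - q l * Jy l (i, j - 1)) / Δy := by
      intro l; simp only [discDiv]; ring
    rw [Finset.sum_congr rfl (fun l _ => this l), Finset.sum_add_distrib,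
      ← Finset.sum_div, ← Finset.sum_div, Finset.sum_sub_distrib, Finset.sum_sub_distrib]
  have hd' := hd i j
  have ha' := ha i j
  have hrhs : (∑ l, q l * c' l (i, j))
      = (∑ l, q l * c l (i, j)) - Δt * ∑ l, q l * discDiv Δx Δy (Jx l) (Jy l) i j := by
    rw [Finset.mul_sum, ← Finset.sum_sub_distrib]
    apply Finset.sum_congr rfl; intro l _; rw [hb]; ring
  simp only [discDiv] at hd' ha' ⊢
  rw [hcx, hcx, hcy, hcy, hrhs, hsum]
  linear_combination ha' + Δt * hd'
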